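/- arXiv:1106.0577 — 7 statements merged into one kernel-verified Lean document; each statement's English description precedes it below -/
import Mathlib

section
/- If a₁(θ) = 1 (that is, θ > 1/2 and θ is irrational), then the heavy set satisfies H_θ = 1/2 - H_{1-θ}, where subtraction is defined pointwise: x ∈ H_θ if and only if 1/2 - x ∈ H_{1-θ}. -/
open Filter Set

/-- The function `f = χ_{[0,1/2]} - χ_{(1/2,1)}` on the circle, evaluated at `x mod 1`. -/
noncomputable def circf (x : ℝ) : ℝ := if Int.fract x ≤ 1/2 then 1 else -1

/-- Birkhoff sums `Sₙ(x) = Σ_{i=0}^{n-1} f(x + iθ)`. -/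
noncomputable def birk (θ : ℝ) (n : ℕ) (x : ℝ) : ℝ :=
  ∑ i ∈ Finset.range n, circf (x + i * θ)

/-- The heavy set `H_θ`. -/
noncomputable def heavy (θ : ℝ) : Set ℝ :=
  {x ∈ Set.Ico (0:ℝ) 1 | ∀ n : ℕ, 1 ≤ n → 0 ≤ birk θ n x}

/-- The strictly heavy set `H*_θ`. -/
noncomputable def sheavy (θ : ℝ) : Set ℝ :=
  {x ∈ Set.Ico (0:ℝ) 1 | ∀ n : ℕ, 1 ≤ n → 0 < birk θ n x}

lemma circf_add_int (x : ℝ) (n : ℤ) : circf (x + n) = circf x := by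
  unfold circf; rw [Int.fract_add_intCast]

lemma circf_half_sub (u : ℝ) : circf (1/2 - u) = circf u := by
  have h : (1/2 - u) = (1/2 - Int.fract u) + ((-⌊u⌋ : ℤ) : ℝ) := by
    rw [Int.fract]; push_cast; ring
  rw [h, circf_add_int]
  have h0 := Int.fract_nonneg u
  have h1 := Int.fract_lt_one u
  unfold circf
  by_cases ht : Int.fract u ≤ 1/2
  · rw [Int.fract_eq_self.mpr ⟨by linarith, by linarith⟩, if_pos (by linarith), if_pos ht]
  · push_neg at ht
    have e : (1/2 - Int.fract u) = (3/2 - Int.fract u) + ((-1 : ℤ) : ℝ) := by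
      push_cast; ring
    rw [e, Int.fract_add_intCast, Int.fract_eq_self.mpr ⟨by linarith, by linarith⟩,
      if_neg (by linarith), if_neg (by linarith)]

lemma birk_half_sub (θ : ℝ) (n : ℕ) (y : ℝ) :
    birk θ n (1/2 - y) = birk (1 - θ) n y := by
  unfold birk
  refine Finset.sum_congr rfl fun i _ => ?_
  have h1 : (1/2 - y) + i * θ = 1/2 - (y + i * (1 - θ) + ((-(i:ℤ) : ℤ) : ℝ)) := by
    push_cast; ring
  rw [h1, circf_half_sub, circf_add_int]

lemma birk_one (θ x : ℝ) : birk θ 1 x = circf x := by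
  unfold birk; simp

lemma heavy_le_half {θ x : ℝ} (hx : x ∈ heavy θ) : x ≤ 1/2 := by
  obtain ⟨⟨hx0, hx1⟩, hb⟩ := hx
  by_contra h
  push_neg at h
  have := hb 1 le_rfl
  rw [birk_one] at this
  unfold circf at this
  rw [Int.fract_eq_self.mpr ⟨hx0, hx1⟩] at this
  rw [if_neg (not_le.mpr h)] at this
  linarith

/-- If `θ > 1/2` is irrational (i.e. `a₁(θ) = 1`), then `H_θ = 1/2 - H_{1-θ}` pointwise. -/
theorem stmt3 (θ : ℝ) (hθ : Irrational θ) (h0 : 1/2 < θ) (h1 : θ < 1) :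
    heavy θ = (fun y : ℝ => 1/2 - y) '' heavy (1 - θ) := by
  ext x
  constructor
  · intro hx
    obtain ⟨⟨hx0, hx1⟩, hb⟩ := hx
    have hx2 : x ≤ 1/2 := heavy_le_half ⟨⟨hx0, hx1⟩, hb⟩
    refine ⟨1/2 - x, ⟨⟨by linarith, by linarith⟩, fun n hn => ?_⟩, by ring⟩
    rw [← birk_half_sub]
    have : 1/2 - (1/2 - x) = x := by ring
    rw [this]
    exact hb n hn
  · rintro ⟨y, hy, rfl⟩
    obtain ⟨⟨hy0, hy1⟩, hb⟩ := hy
    have hy2 : y ≤ 1/2 := heavy_le_half ⟨⟨hy0, hy1⟩, hb⟩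
    refine ⟨⟨by simp; linarith, by simp; linarith⟩, fun n hn => ?_⟩
    rw [birk_half_sub]
    exact hb n hn
end

section
/- Let θ ∈ (0,1) be irrational with a₁(θ) ≠ 1 (i.e., θ < 1/2), let n = ⌊a₁(θ)/2⌋ ≥ 1 (equivalently n = ⌊1/(2θ)⌋, so nθ < 1/2 < (n+1)θ) and δ = 1 - 2nθ. Then H_θ ∩ (δ/2 + θ, 1) = ∅; that is, every x with δ/2 + θ < x < 1 has some partial sum Sₘ(x) < 0. -/
open Filter Set

/-- For irrational `θ ∈ (0,1/2)`, with `n = ⌊a₁(θ)/2⌋ = ⌊1/θ⌋/2` and `δ = 1 - 2nθ`,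
the heavy set avoids `(δ/2 + θ, 1)`. -/
theorem stmt5 (θ : ℝ) (hθ : Irrational θ) (h0 : 0 < θ) (h2 : θ < 1/2)
    (n : ℤ) (hn : n = ⌊1/θ⌋ / 2) (δ : ℝ) (hδ : δ = 1 - 2*(n:ℝ)*θ) :
    heavy θ ∩ Set.Ioo (δ/2 + θ) 1 = ∅ := by
  ext x
  simp only [Set.mem_inter_iff, Set.mem_empty_iff_false, iff_false, heavy, Set.mem_setOf_eq,
    Set.mem_Ico, Set.mem_Ioo, not_and]
  rintro ⟨⟨hx0, hx1⟩, hheavy⟩ hxl hxu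
  -- First, δ > 0.
  have hθpos : (0:ℝ) < 1/θ := by positivity
  have hfl0 : (0:ℤ) ≤ ⌊1/θ⌋ := Int.floor_nonneg.mpr (le_of_lt hθpos)
  have h2n : 2 * n ≤ ⌊1/θ⌋ := by omega
  have hflirr : Irrational (1/θ) := by
    rw [one_div]; exact hθ.inv
  have hfllt : ((⌊1/θ⌋ : ℤ) : ℝ) < 1/θ :=
    lt_of_le_of_ne (Int.floor_le _) (fun h => hflirr.ne_int ⌊1/θ⌋ h.symm)
  have h2nθ : 2 * (n:ℝ) * θ < 1 := by
    have : ((2*n : ℤ) : ℝ) ≤ ((⌊1/θ⌋ : ℤ) : ℝ) := by exact_mod_cast h2n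
    have h3 : 2 * (n:ℝ) * θ ≤ ((⌊1/θ⌋ : ℤ) : ℝ) * θ := by
      push_cast at this ⊢
      nlinarith
    have hinv : (1/θ) * θ = 1 := by field_simp
    nlinarith [mul_lt_mul_of_pos_right hfllt h0]
  have hδpos : 0 < δ := by rw [hδ]; linarith
  have hnθ : (n:ℝ) * θ < 1/2 := by rw [hδ] at hδpos; linarith
  -- Case x > 1/2 : S₁(x) = -1.
  by_cases hhalf : 1/2 < x
  · have h1 := hheavy 1 le_rfl
    have hfr : Int.fract x = x := Int.fract_eq_self.mpr ⟨hx0, hx1⟩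
    have hb1 : birk θ 1 x = circf x := by simp [birk]
    have : circf x = -1 := by
      unfold circf; rw [hfr, if_neg (not_le.mpr hhalf)]
    rw [hb1, this] at h1
    linarith
  push_neg at hhalf
  -- Now x ≤ 1/2, and x > δ/2 + θ = 1/2 - (n-1)θ.
  set t : ℝ := 1/2 - x with ht
  have ht0 : 0 ≤ t := by simp [ht]; linarith
  have htlt : t < ((n:ℝ) - 1) * θ := by
    rw [hδ] at hxl
    simp only [ht]
    nlinarith
  set K : ℕ := (⌊t/θ⌋).toNat with hK
  have hKfl : (K : ℤ) = ⌊t/θ⌋ := Int.toNat_of_nonneg (Int.floor_nonneg.mpr (by positivity))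
  have hKle : (K:ℝ) * θ ≤ t := by
    have h5 : ((K:ℤ):ℝ) ≤ t/θ := hKfl ▸ Int.floor_le _
    push_cast at h5
    calc (K:ℝ) * θ ≤ (t/θ) * θ := mul_le_mul_of_nonneg_right h5 (le_of_lt h0)
    _ = t := by field_simp
  have hKgt : t < ((K:ℝ) + 1) * θ := by
    have h5 : t/θ < ((K:ℤ):ℝ) + 1 := hKfl ▸ Int.lt_floor_add_one _
    push_cast at h5
    calc t = (t/θ) * θ := by field_simp
    _ < ((K:ℝ) + 1) * θ := mul_lt_mul_of_pos_right h5 h0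
  -- K + 2 ≤ n
  have hKn : (K:ℝ) + 2 ≤ (n:ℝ) := by
    have h6 : (K:ℝ) * θ < ((n:ℝ) - 1) * θ := lt_of_le_of_lt hKle htlt
    have h7 : (K:ℝ) < (n:ℝ) - 1 := lt_of_mul_lt_mul_right h6 (le_of_lt h0)
    have h8 : (K:ℤ) < n - 1 := by exact_mod_cast h7
    have h9 : (K:ℤ) + 2 ≤ n := by omega
    exact_mod_cast h9
  set J : ℕ := (⌈(1-x)/θ⌉).toNat with hJ
  have hJceil : (J : ℤ) = ⌈(1-x)/θ⌉ := Int.toNat_of_nonneg (Int.ceil_nonneg (div_nonneg (by linarith) (le_of_lt h0)))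
  have hJge : (1-x)/θ ≤ (J:ℝ) := by
    have := Int.le_ceil ((1-x)/θ)
    rw [← hJceil] at this
    exact_mod_cast this
  -- 2K + 3 ≤ J
  have hJgt : 2 * K + 3 ≤ J := by
    have key : (2*(K:ℝ) + 2) < (1-x)/θ := by
      have h10 : ((K:ℝ) + 2) * θ ≤ (n:ℝ) * θ := mul_le_mul_of_nonneg_right (by linarith) (le_of_lt h0)
      have h11 : (2*(K:ℝ) + 2) * θ < 1 - x := by
        have ht' : (K:ℝ) * θ ≤ 1/2 - x := by rw [ht] at hKle; exact hKle
        nlinarith [ht', h10, hnθ]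
      calc (2*(K:ℝ) + 2) = ((2*(K:ℝ) + 2) * θ) / θ := by field_simp
      _ < (1-x)/θ := by
        apply div_lt_div_of_pos_right h11 h0
    have h12 : (2*(K:ℤ) + 2) < ⌈(1-x)/θ⌉ := by
      rw [Int.lt_ceil]
      exact_mod_cast key
    have h13 : (2*(K:ℤ) + 3) ≤ (J:ℤ) := by rw [hJceil]; omega
    exact_mod_cast h13
  -- terms of the Birkhoff sum
  have hterm : ∀ i ∈ Finset.range J, circf (x + i * θ) = if i ≤ K then (1:ℝ) else -1 := by
    intro i hi
    rw [Finset.mem_range] at hi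
    have hi' : (i:ℝ) ≤ (J:ℝ) - 1 := by
      have : i + 1 ≤ J := hi
      have := (Nat.cast_le (α := ℝ)).mpr this
      push_cast at this
      linarith
    have hJlt : (J:ℝ) - 1 < (1-x)/θ := by
      have := Int.ceil_lt_add_one ((1-x)/θ)
      rw [← hJceil] at this
      push_cast at this
      linarith
    have hxi1 : x + i * θ < 1 := by
      have h14 : (i:ℝ) < (1-x)/θ := lt_of_le_of_lt hi' hJlt
      have h15 : (i:ℝ) * θ < 1 - x := by
        calc (i:ℝ) * θ < ((1-x)/θ) * θ := mul_lt_mul_of_pos_right h14 h0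
        _ = 1 - x := by field_simp
      linarith
    have hxi0 : 0 ≤ x + i * θ := by positivity
    have hfr : Int.fract (x + i * θ) = x + i * θ := Int.fract_eq_self.mpr ⟨hxi0, hxi1⟩
    by_cases hiK : i ≤ K
    · have : (i:ℝ) * θ ≤ t := by
        calc (i:ℝ) * θ ≤ (K:ℝ) * θ :=
          mul_le_mul_of_nonneg_right (by exact_mod_cast hiK) (le_of_lt h0)
        _ ≤ t := hKle
      have hle : x + i * θ ≤ 1/2 := by simp only [ht] at this; linarith
      rw [if_pos hiK]; unfold circf; rw [hfr, if_pos hle]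
    · have hKi : (K:ℝ) + 1 ≤ (i:ℝ) := by
        have : K + 1 ≤ i := by omega
        exact_mod_cast this
      have : t < (i:ℝ) * θ := by
        calc t < ((K:ℝ) + 1) * θ := hKgt
        _ ≤ (i:ℝ) * θ := mul_le_mul_of_nonneg_right hKi (le_of_lt h0)
      have hgt : 1/2 < x + i * θ := by simp only [ht] at this; linarith
      rw [if_neg hiK]; unfold circf; rw [hfr, if_neg (not_le.mpr hgt)]
  -- compute the sum
  have hsum : birk θ J x = (K:ℝ) + 1 - ((J:ℝ) - ((K:ℝ) + 1)) := by
    rw [birk, Finset.sum_congr rfl hterm]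
    rw [Finset.range_eq_Ico, ← Finset.sum_Ico_consecutive _ (Nat.zero_le (K+1)) (by omega : K + 1 ≤ J)]
    rw [Finset.sum_congr rfl (fun i hi => if_pos (by
        rw [Finset.mem_Ico] at hi; omega : i ≤ K)),
      Finset.sum_congr (rfl : Finset.Ico (K+1) J = Finset.Ico (K+1) J) (fun i hi => if_neg (by
        rw [Finset.mem_Ico] at hi; omega : ¬ i ≤ K))]
    rw [Finset.sum_const, Finset.sum_const]
    simp [Nat.card_Ico]
    rw [Nat.cast_sub (by omega : K + 1 ≤ J)]
    push_cast
    ring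
  have hJ1 : 1 ≤ J := by omega
  have := hheavy J hJ1
  rw [hsum] at this
  have hJR : 2*(K:ℝ) + 3 ≤ (J:ℝ) := by exact_mod_cast hJgt
  linarith
end

section
/- Let θ ∈ (0,1) be irrational with θ < 1/2, n = ⌊a₁(θ)/2⌋, and δ = 1 - 2nθ. If x ∈ (δ/2, δ/2 + θ] ∩ [0,1), then there exists m ≥ 1 with Sₘ(x) ≤ 0. Consequently the strictly heavy set H*_θ is contained in [0, δ/2]. -/
open Filter Set

lemma circf_one {y : ℝ} (h0 : 0 ≤ y) (h2 : y ≤ 1/2) : circf y = 1 := by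
  have hf : Int.fract y = y := Int.fract_eq_self.mpr ⟨h0, by linarith⟩
  rw [circf, hf, if_pos h2]

lemma circf_neg {y : ℝ} (h1 : 1/2 < y) (h2 : y < 1) : circf y = -1 := by
  have hf : Int.fract y = y := Int.fract_eq_self.mpr ⟨by linarith, h2⟩
  rw [circf, hf, if_neg (by linarith)]

lemma key (θ δ : ℝ) (N : ℕ) (hθ : 0 < θ) (hδ : 0 < δ)
    (hsum : δ/2 + N*θ = 1/2) {y : ℝ} (hy1 : δ/2 < y) (hy2 : y ≤ δ/2 + θ) :
    birk θ (2*N) y ≤ 0 := by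
  have h2N : 2*N = N + N := by ring
  rw [birk, h2N, Finset.sum_range_add]
  have hA : ∀ i ∈ Finset.range N, circf (y + i*θ) = 1 := by
    intro i hi
    have hi' : (i:ℝ) ≤ (N:ℝ) - 1 := by
      have : (i:ℕ) + 1 ≤ N := Finset.mem_range.mp hi
      have := (Nat.cast_le (α := ℝ)).mpr this
      push_cast at this; linarith
    apply circf_one
    · nlinarith
    · nlinarith
  have hB : ∀ i ∈ Finset.range N, circf (y + ((N + i : ℕ):ℝ)*θ) = -1 := by
    intro i hi
    have hi' : (i:ℝ) ≤ (N:ℝ) - 1 := by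
      have : (i:ℕ) + 1 ≤ N := Finset.mem_range.mp hi
      have := (Nat.cast_le (α := ℝ)).mpr this
      push_cast at this; linarith
    have hc : ((N + i : ℕ):ℝ) = (N:ℝ) + (i:ℝ) := by push_cast; ring
    rw [hc]
    apply circf_neg
    · nlinarith
    · nlinarith
  rw [Finset.sum_congr rfl hA, Finset.sum_congr rfl hB]
  simp

/-- For irrational `θ ∈ (0,1/2)`, `n = ⌊1/θ⌋/2`, `δ = 1 - 2nθ`: every
`x ∈ (δ/2, δ/2 + θ] ∩ [0,1)` has some nonpositive partial sum; hence `H*_θ ⊆ [0, δ/2]`. -/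
theorem stmt7 (θ : ℝ) (hθ : Irrational θ) (h0 : 0 < θ) (h2 : θ < 1/2)
    (n : ℤ) (hn : n = ⌊1/θ⌋ / 2) (δ : ℝ) (hδ : δ = 1 - 2*(n:ℝ)*θ) :
    (∀ x ∈ Set.Ioc (δ/2) (δ/2 + θ) ∩ Set.Ico (0:ℝ) 1,
        ∃ m : ℕ, 1 ≤ m ∧ birk θ m x ≤ 0) ∧
      sheavy θ ⊆ Set.Icc 0 (δ/2) := by
  have ha : (2:ℤ) ≤ ⌊1/θ⌋ := by
    rw [Int.le_floor]
    rw [le_div_iff₀ h0]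
    push_cast
    linarith
  have hn1 : 1 ≤ n := by omega
  have hn2 : 2*n ≤ ⌊1/θ⌋ := by omega
  have hfl : (⌊1/θ⌋:ℝ) ≤ 1/θ := Int.floor_le _
  have h2n : 2*(n:ℝ)*θ ≤ 1 := by
    have hc : (2*(n:ℝ)) ≤ (⌊1/θ⌋:ℝ) := by exact_mod_cast hn2
    have := (le_div_iff₀ h0).mp (le_trans hc hfl)
    linarith
  have hne : 2*(n:ℝ)*θ ≠ 1 := by
    intro h
    apply hθ
    refine ⟨1/(2*(n:ℚ)), ?_⟩
    have hn0 : (n:ℝ) ≠ 0 := by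
      have : (1:ℝ) ≤ (n:ℝ) := by exact_mod_cast hn1
      linarith
    push_cast
    field_simp
    linarith
  have hδ0 : 0 < δ := by
    rw [hδ]
    have := lt_of_le_of_ne h2n hne
    linarith
  set N : ℕ := n.toNat with hNdef
  have hNn : (N:ℝ) = (n:ℝ) := by
    have : (N:ℤ) = n := Int.toNat_of_nonneg (by omega)
    exact_mod_cast this
  have hN1 : 1 ≤ N := by omega
  have hsum : δ/2 + (N:ℝ)*θ = 1/2 := by rw [hNn, hδ]; ring
  constructor
  · rintro x ⟨⟨hx1, hx2⟩, -, -⟩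
    exact ⟨2*N, by omega, key θ δ N h0 hδ0 hsum hx1 hx2⟩
  · rintro x ⟨⟨hx0, hx1⟩, hpos⟩
    refine ⟨hx0, ?_⟩
    by_contra hcon
    push_neg at hcon
    -- x ≤ 1/2 since S₁(x) > 0
    have hhalf : x ≤ 1/2 := by
      have h1 := hpos 1 le_rfl
      rw [birk, Finset.sum_range_one] at h1
      have hx : x + (0:ℕ)*θ = x := by push_cast; ring
      rw [hx, circf] at h1
      by_contra hb
      push_neg at hb
      have hf : Int.fract x = x := Int.fract_eq_self.mpr ⟨hx0, hx1⟩
      rw [hf, if_neg (by linarith)] at h1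
      linarith
    set K : ℤ := ⌈(x - δ/2)/θ⌉ with hKdef
    have hr0 : 0 < (x - δ/2)/θ := div_pos (by linarith) h0
    have hK1 : 1 ≤ K := Int.ceil_pos.mpr hr0
    set k : ℕ := (K-1).toNat with hkdef
    have hkK : (k:ℝ) = (K:ℝ) - 1 := by
      have : ((K-1).toNat : ℤ) = K - 1 := Int.toNat_of_nonneg (by omega)
      have := congrArg (fun z : ℤ => (z:ℝ)) this
      push_cast at this
      simpa [hkdef] using this
    have hceil_le : (x - δ/2)/θ ≤ (K:ℝ) := Int.le_ceil _
    have hceil_gt : (K:ℝ) - 1 < (x - δ/2)/θ := by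
      have := Int.ceil_lt_add_one ((x - δ/2)/θ)
      linarith
    have hklt : (k:ℝ)*θ < x - δ/2 := by
      rw [hkK]
      calc ((K:ℝ)-1)*θ < ((x - δ/2)/θ)*θ := by
            apply mul_lt_mul_of_pos_right hceil_gt h0
        _ = x - δ/2 := div_mul_cancel₀ _ (ne_of_gt h0)
    have hkge : x - δ/2 ≤ ((k:ℝ)+1)*θ := by
      rw [hkK]
      calc x - δ/2 = ((x - δ/2)/θ)*θ := (div_mul_cancel₀ _ (ne_of_gt h0)).symm
        _ ≤ (K:ℝ)*θ := mul_le_mul_of_nonneg_right hceil_le (le_of_lt h0)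
        _ = ((K:ℝ)-1+1)*θ := by ring
    have hkN : k < N := by
      have h1 : (k:ℝ)*θ < (N:ℝ)*θ := by nlinarith
      have : (k:ℝ) < (N:ℝ) := lt_of_mul_lt_mul_right h1 (le_of_lt h0)
      exact_mod_cast this
    set y : ℝ := x - k*θ with hydef
    have hy1 : δ/2 < y := by rw [hydef]; linarith
    have hy2 : y ≤ δ/2 + θ := by rw [hydef]; linarith
    have hkey := key θ δ N h0 hδ0 hsum hy1 hy2
    have hsplit : 2*N = k + (2*N - k) := by omega
    rw [birk, hsplit, Finset.sum_range_add] at hkey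
    have hA : ∀ j ∈ Finset.range k, circf (y + j*θ) = 1 := by
      intro j hj
      have hj' : (j:ℝ) ≤ (k:ℝ) - 1 := by
        have : (j:ℕ) + 1 ≤ k := Finset.mem_range.mp hj
        have := (Nat.cast_le (α := ℝ)).mpr this
        push_cast at this; linarith
      apply circf_one
      · rw [hydef]; nlinarith
      · rw [hydef]; nlinarith
    have hB : ∀ i ∈ Finset.range (2*N - k),
        circf (y + ((k + i : ℕ):ℝ)*θ) = circf (x + i*θ) := by
      intro i hi
      congr 1
      rw [hydef]; push_cast; ring
    rw [Finset.sum_congr rfl hA, Finset.sum_congr rfl hB] at hkey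
    simp at hkey
    have hb : birk θ (2*N - k) x = ∑ i ∈ Finset.range (2*N - k), circf (x + i*θ) := rfl
    have hp := hpos (2*N - k) (by omega)
    rw [hb] at hp
    have hk0 : (0:ℝ) ≤ (k:ℕ) := Nat.cast_nonneg k
    linarith
end

section
/- If θ ∈ (0,1) is irrational with continued fraction expansion [2n, a₂, a₃, ...] where n ≥ 1, and δ = 1 - 2nθ, then δ/2 + a₂δ < 1/2 - (n-1)θ < δ/2 + (a₂+1)δ. -/
/-!
Write `1/θ = 2n + f` with `f = fract (1/θ)`, so that `δ = 1 - 2nθ = fθ` and `a₂ = ⌊1/f⌋`.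
Since `1/f` is irrational, `a₂ < 1/f < a₂ + 1`, i.e. `a₂δ < θ < (a₂+1)δ`; the claim follows
from the identity `1/2 - (n-1)θ = δ/2 + θ`.
-/

theorem Irrational.floor_lt {x : ℝ} (hx : Irrational x) : (⌊x⌋ : ℝ) < x :=
  (Int.floor_le x).lt_of_ne (hx.ne_int _).symm

theorem Irrational.fract_pos {x : ℝ} (hx : Irrational x) : 0 < Int.fract x :=
  Int.fract_pos.2 (hx.ne_int _)

theorem Int.fract_one_div_mul_self {θ : ℝ} (hθ : θ ≠ 0) :
    Int.fract (1 / θ) * θ = 1 - ⌊1 / θ⌋ * θ := by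
  rw [Int.fract, sub_mul, one_div_mul_cancel hθ]

theorem Irrational.floor_one_div_fract_mul_lt_and_lt {θ : ℝ} (hθ : Irrational θ) (h0 : 0 < θ) :
    let f := Int.fract (1 / θ)
    (⌊1 / f⌋ : ℝ) * (f * θ) < θ ∧ θ < (⌊1 / f⌋ + 1) * (f * θ) := by
  intro f
  have hf_irr : Irrational f := (one_div θ ▸ hθ.inv).sub_intCast _
  have hf : 0 < f := (one_div θ ▸ hθ.inv).fract_pos
  have hinv_irr : Irrational (1 / f) := one_div f ▸ hf_irr.inv
  have hlow : (⌊1 / f⌋ : ℝ) * f < 1 := (lt_div_iff₀ hf).1 hinv_irr.floor_lt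
  have hup : 1 < (⌊1 / f⌋ + 1) * f := (div_lt_iff₀ hf).1 (Int.lt_floor_add_one _)
  constructor
  · calc (⌊1 / f⌋ : ℝ) * (f * θ) = (⌊1 / f⌋ * f) * θ := by ring
      _ < 1 * θ := by gcongr
      _ = θ := one_mul θ
  · calc θ = 1 * θ := (one_mul θ).symm
      _ < ((⌊1 / f⌋ + 1) * f) * θ := by gcongr
      _ = (⌊1 / f⌋ + 1) * (f * θ) := by ring

theorem stmt9_general (θ : ℝ) (hθ : Irrational θ) (h0 : 0 < θ)
    (n a2 : ℕ)
    (ha1 : ⌊1/θ⌋ = 2 * (n : ℤ)) (ha2 : ⌊1 / Int.fract (1/θ)⌋ = (a2 : ℤ))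
    (δ : ℝ) (hδ : δ = 1 - 2*(n:ℝ)*θ) :
    δ/2 + (a2:ℝ)*δ < 1/2 - ((n:ℝ) - 1)*θ ∧
      1/2 - ((n:ℝ) - 1)*θ < δ/2 + ((a2:ℝ)+1)*δ := by
  have hfδ : Int.fract (1 / θ) * θ = δ := by
    rw [Int.fract_one_div_mul_self h0.ne', ha1, hδ]
    push_cast
    ring
  obtain ⟨hlow, hup⟩ := hθ.floor_one_div_fract_mul_lt_and_lt h0
  simp only [ha2, hfδ, Int.cast_natCast] at hlow hup
  have hmid : 1/2 - ((n:ℝ) - 1)*θ = δ/2 + θ := by rw [hδ]; ring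
  rw [hmid]
  constructor <;> linarith

/-- If `θ = [2n, a₂, ...]` is irrational with `n ≥ 1` and `δ = 1 - 2nθ`, then
`δ/2 + a₂δ < 1/2 - (n-1)θ < δ/2 + (a₂+1)δ`. -/
theorem stmt9 (θ : ℝ) (hθ : Irrational θ) (h0 : 0 < θ) (h1 : θ < 1)
    (n a2 : ℕ) (hn : 1 ≤ n) (ha2pos : 1 ≤ a2)
    (ha1 : ⌊1/θ⌋ = 2 * (n : ℤ)) (ha2 : ⌊1 / Int.fract (1/θ)⌋ = (a2 : ℤ))
    (δ : ℝ) (hδ : δ = 1 - 2*(n:ℝ)*θ) :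
    δ/2 + (a2:ℝ)*δ < 1/2 - ((n:ℝ) - 1)*θ ∧
      1/2 - ((n:ℝ) - 1)*θ < δ/2 + ((a2:ℝ)+1)*δ :=
  stmt9_general θ hθ h0 n a2 ha1 ha2 δ hδ
end

section
/- If θ ∈ (0,1) is irrational with continued fraction expansion [2n, a₂, a₃, ...] (n ≥ 1), and δ = 1 - 2nθ, then (a₂+1)δ < 1/2 - (n-1)θ if and only if a₃ = 1, equivalently if and only if γ²(θ) > 1/2, where γ is the Gauss map. -/
/-!
Write `γ = gaussMap` and `δ = 1 - 2nθ = γ(θ) θ`. Two steps of the identity `γ(x) x = 1 - ⌊1/x⌋ x`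
give `γ²(θ) δ = θ - a₂ δ`, and since `1/2 - (n-1)θ = δ/2 + θ`, the inequality
`(a₂+1)δ < 1/2 - (n-1)θ` is `δ/2 < γ²(θ) δ`, i.e. `1/2 < γ²(θ)` because `δ > 0`.
Finally `a₃ = ⌊1/γ²(θ)⌋` equals `1` exactly when `γ²(θ) ∈ (1/2, 1]`.
-/

noncomputable def gaussMap (x : ℝ) : ℝ := Int.fract (1 / x)

lemma gaussMap_mul_self {x : ℝ} (hx : x ≠ 0) : gaussMap x * x = 1 - ⌊1 / x⌋ * x := by
  rw [gaussMap, Int.fract, sub_mul, one_div_mul_cancel hx]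

lemma Irrational.gaussMap_pos {x : ℝ} (hx : Irrational x) : 0 < gaussMap x :=
  Int.fract_pos.mpr (one_div x ▸ hx.inv.ne_int _)

lemma Irrational.gaussMap {x : ℝ} (hx : Irrational x) : Irrational (gaussMap x) := by
  rw [_root_.gaussMap, Int.fract, one_div]
  exact hx.inv.sub_intCast _

lemma Int.floor_one_div_eq_one_iff {γ : ℝ} (h0 : 0 < γ) (h1 : γ ≤ 1) :
    ⌊1 / γ⌋ = 1 ↔ 1 / 2 < γ := by
  rw [Int.floor_eq_iff, Int.cast_one, le_div_iff₀ h0, div_lt_iff₀ h0]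
  constructor
  · rintro ⟨-, h⟩
    linarith
  · intro h
    constructor <;> linarith

theorem stmt10_general (θ : ℝ) (hθ : Irrational θ) (h0 : 0 < θ)
    (n a2 : ℕ)
    (ha1 : ⌊1/θ⌋ = 2 * (n : ℤ)) (ha2 : ⌊1 / Int.fract (1/θ)⌋ = (a2 : ℤ))
    (δ : ℝ) (hδ : δ = 1 - 2*(n:ℝ)*θ)
    (γ2 : ℝ) (hγ2 : γ2 = Int.fract (1 / Int.fract (1/θ))) :
    (((a2:ℝ)+1)*δ < 1/2 - ((n:ℝ) - 1)*θ ↔ ⌊1/γ2⌋ = 1) ∧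
      (((a2:ℝ)+1)*δ < 1/2 - ((n:ℝ) - 1)*θ ↔ 1/2 < γ2) := by
  change γ2 = gaussMap (gaussMap θ) at hγ2
  change ⌊1 / gaussMap θ⌋ = (a2 : ℤ) at ha2
  have hγ1 : gaussMap θ * θ = δ := by
    rw [gaussMap_mul_self h0.ne', ha1, hδ]
    push_cast
    ring
  have hδpos : 0 < δ := hγ1 ▸ mul_pos hθ.gaussMap_pos h0
  have hγ2δ : γ2 * δ = θ - a2 * δ := by
    have h := gaussMap_mul_self hθ.gaussMap_pos.ne'
    rw [ha2, ← hγ2] at h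
    rw [← hγ1]
    linear_combination θ * h
  have iff_half : ((a2:ℝ)+1)*δ < 1/2 - ((n:ℝ) - 1)*θ ↔ 1/2 < γ2 := by
    rw [← mul_lt_mul_iff_left₀ hδpos (b := 1 / 2), hγ2δ]
    constructor <;> intro h <;> linarith
  refine ⟨iff_half.trans ?_, iff_half⟩
  have hγ2pos : 0 < γ2 := hγ2 ▸ hθ.gaussMap.gaussMap_pos
  exact (Int.floor_one_div_eq_one_iff hγ2pos (hγ2 ▸ (Int.fract_lt_one _).le)).symm

/-- If `θ = [2n, a₂, a₃, ...]` is irrational with `n ≥ 1` and `δ = 1 - 2nθ`, then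
`(a₂+1)δ < 1/2 - (n-1)θ` iff `a₃ = 1`, equivalently iff `γ²(θ) > 1/2`. -/
theorem stmt10 (θ : ℝ) (hθ : Irrational θ) (h0 : 0 < θ) (h1 : θ < 1)
    (n a2 : ℕ) (hn : 1 ≤ n) (ha2pos : 1 ≤ a2)
    (ha1 : ⌊1/θ⌋ = 2 * (n : ℤ)) (ha2 : ⌊1 / Int.fract (1/θ)⌋ = (a2 : ℤ))
    (δ : ℝ) (hδ : δ = 1 - 2*(n:ℝ)*θ)
    (γ2 : ℝ) (hγ2 : γ2 = Int.fract (1 / Int.fract (1/θ))) :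
    (((a2:ℝ)+1)*δ < 1/2 - ((n:ℝ) - 1)*θ ↔ ⌊1/γ2⌋ = 1) ∧
      (((a2:ℝ)+1)*δ < 1/2 - ((n:ℝ) - 1)*θ ↔ 1/2 < γ2) :=
  stmt10_general θ hθ h0 n a2 ha1 ha2 δ hδ γ2 hγ2
end

section
/- For every irrational θ ∈ (0,1), the heavy set H_θ = {x ∈ [0,1) : Sₙ(x) ≥ 0 for all n ≥ 1} is infinite. -/
/-!
Since `f(z) + f(z + 1/2) ≥ 0`, we have `Sₙ(0) + Sₙ(1/2) ≥ 0` for every `n`, so the sums cannot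
tend to `-∞` uniformly. If for some `N` every point had some `n ≤ N` with `Sₙ < 0`, then
(the sums being integers) `Sₙ ≤ -1`, and by the cocycle identity all Birkhoff sums would decay
at rate `1/N`: a contradiction. As `f` is upper semicontinuous, the sets `{Sₙ ≥ 0 for n ≤ N}`
are closed, and compactness gives a point `x₀` with `Sₙ(x₀) ≥ 0` for all `n`.
At every time `m` at which `n ↦ Sₙ(x₀)` attains its minimum over `n ≥ m`, the point `x₀ + mθ`
is heavy; there are infinitely many such times, and irrationality of `θ` makes these points
distinct mod 1.
-/

open Filter Set

lemma infinite_setOf_isMinOn_Ici {α : Type*} [LinearOrder α] [WellFoundedLT α] (u : ℕ → α) :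
    {m | IsMinOn u (Ici m) m}.Infinite := by
  refine Set.infinite_of_forall_exists_gt fun m => ?_
  have hmin := Function.argminOn_mem u (Ioi m) nonempty_Ioi
  exact ⟨_, fun n hn => Function.argminOn_le u _ (lt_of_lt_of_le hmin hn), hmin⟩

lemma Irrational.injective_fract_add_nat_mul {θ : ℝ} (hθ : Irrational θ) (x : ℝ) :
    Function.Injective fun n : ℕ => Int.fract (x + n * θ) := by
  intro a b hab
  obtain ⟨z, hz⟩ := Int.fract_eq_fract.1 hab
  by_contra hne
  have hab' : (a : ℤ) - b ≠ 0 := sub_ne_zero.2 (Nat.cast_injective.ne hne)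
  refine (hθ.intCast_mul hab').ne_int z ?_
  push_cast
  linarith

lemma circf_le_one (z : ℝ) : circf z ≤ 1 := by
  unfold circf; split <;> norm_num

lemma circf_add_circf_add_half_nonneg (z : ℝ) : 0 ≤ circf z + circf (z + 1/2) := by
  by_cases hz : Int.fract z ≤ 1/2
  · simp only [circf, hz, if_true]
    split <;> norm_num
  · have hfract : Int.fract (z + 1/2) = Int.fract z - 1/2 := by
      refine Int.fract_eq_iff.2 ⟨by linarith, by linarith [Int.fract_lt_one z], ⌊z⌋ + 1, ?_⟩
      push_cast
      linarith [Int.floor_add_fract z]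
    simp only [circf, hz, hfract, if_false]
    split_ifs <;> linarith [Int.fract_lt_one z]

lemma upperSemicontinuous_circf : UpperSemicontinuous circf := by
  intro x y hy
  by_cases hx : Int.fract x ≤ 1/2
  · rw [circf, if_pos hx] at hy
    filter_upwards with z using (circf_le_one z).trans_lt hy
  · have hcont : ContinuousAt Int.fract x := by
      refine continuousAt_fract fun h => hx ?_
      rw [Int.fract, ← h, sub_self]
      norm_num
    filter_upwards [hcont.eventually (lt_mem_nhds (not_le.1 hx))] with z hz
    have hzx : circf z = circf x := by rw [circf, circf, if_neg (not_le.2 hz), if_neg hx]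
    rwa [hzx]

section Birkhoff

variable (θ : ℝ)

lemma birk_zero (x : ℝ) : birk θ 0 x = 0 := by
  simp [birk]

lemma birk_add (m n : ℕ) (x : ℝ) : birk θ (m + n) x = birk θ m x + birk θ n (x + m * θ) := by
  simp only [birk, Finset.sum_range_add, Nat.cast_add, add_mul, add_assoc]

lemma birk_le (n : ℕ) (x : ℝ) : birk θ n x ≤ n :=
  (Finset.sum_le_sum fun _ _ => circf_le_one _).trans (by simp)

lemma exists_intCast_eq_birk (n : ℕ) (x : ℝ) : ∃ k : ℤ, birk θ n x = k :=
  ⟨∑ i ∈ Finset.range n, if Int.fract (x + i * θ) ≤ 1/2 then 1 else -1, by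
    simp [birk, circf, apply_ite]⟩

lemma birk_fract (n : ℕ) (x : ℝ) : birk θ n (Int.fract x) = birk θ n x := by
  rw [← Int.self_sub_floor]
  simp only [birk, circf, sub_add_eq_add_sub, Int.fract_sub_intCast]

lemma birk_add_birk_add_half_nonneg (n : ℕ) (x : ℝ) : 0 ≤ birk θ n x + birk θ n (x + 1/2) := by
  rw [birk, birk, ← Finset.sum_add_distrib]
  refine Finset.sum_nonneg fun i _ => ?_
  rw [add_right_comm x]
  exact circf_add_circf_add_half_nonneg _

lemma upperSemicontinuous_birk (n : ℕ) : UpperSemicontinuous (birk θ n) :=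
  upperSemicontinuous_sum fun i _ =>
    upperSemicontinuous_circf.comp (continuous_add_const ((i : ℝ) * θ))

lemma birk_le_neg_one_of_neg {n : ℕ} {x : ℝ} (h : birk θ n x < 0) : birk θ n x ≤ -1 := by
  obtain ⟨k, hk⟩ := exists_intCast_eq_birk θ n x
  rw [hk] at h ⊢
  have : k < 0 := by exact_mod_cast h
  exact_mod_cast Int.le_sub_one_of_lt this

lemma exists_natCast_eq_birk {n : ℕ} {x : ℝ} (h : 0 ≤ birk θ n x) : ∃ k : ℕ, birk θ n x = k := by
  obtain ⟨k, hk⟩ := exists_intCast_eq_birk θ n x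
  rw [hk] at h ⊢
  exact ⟨k.toNat, by exact_mod_cast (Int.toNat_of_nonneg (by exact_mod_cast h)).symm⟩

/-- Cleared of denominators, this says `Sₘ(x) ≤ 2N - m/N`. -/
lemma birk_drift {N : ℕ} (hN : ∀ x, ∃ n, 1 ≤ n ∧ n ≤ N ∧ birk θ n x ≤ -1) (m : ℕ) (x : ℝ) :
    N * birk θ m x + m ≤ 2 * N ^ 2 := by
  induction m using Nat.strong_induction_on generalizing x with
  | _ m ih =>
  rcases le_or_gt m N with hmN | hNm
  · have hS := birk_le θ m x
    have hmN' : (m : ℝ) ≤ N := by exact_mod_cast hmN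
    have hN2 : (N : ℝ) ≤ N ^ 2 := by exact_mod_cast Nat.le_self_pow two_ne_zero N
    nlinarith [mul_le_mul_of_nonneg_left hS N.cast_nonneg]
  · obtain ⟨n, hn1, hnN, hn⟩ := hN x
    obtain ⟨k, rfl⟩ : ∃ k, m = n + k := ⟨m - n, by omega⟩
    have hk := ih k (by omega) (x + n * θ)
    have hnN' : (n : ℝ) ≤ N := by exact_mod_cast hnN
    rw [birk_add]
    push_cast
    nlinarith

lemma exists_forall_le_birk_nonneg (N : ℕ) : ∃ x, ∀ n ≤ N, 0 ≤ birk θ n x := by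
  by_contra! h
  have hN : ∀ x, ∃ n, 1 ≤ n ∧ n ≤ N ∧ birk θ n x ≤ -1 := fun x => by
    obtain ⟨n, hnN, hn⟩ := h x
    refine ⟨n, Nat.one_le_iff_ne_zero.2 ?_, hnN, birk_le_neg_one_of_neg θ hn⟩
    rintro rfl
    exact hn.ne (birk_zero θ x)
  have h₀ := birk_drift θ hN (2 * N ^ 2 + 1) 0
  have h₁ := birk_drift θ hN (2 * N ^ 2 + 1) (0 + 1/2)
  have hpair := birk_add_birk_add_half_nonneg θ (2 * N ^ 2 + 1) 0
  push_cast at h₀ h₁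
  nlinarith [(N.cast_nonneg : (0 : ℝ) ≤ N)]

lemma exists_forall_birk_nonneg : ∃ x, ∀ n, 0 ≤ birk θ n x := by
  let K : ℕ → Set ℝ := fun N => Icc 0 1 ∩ ⋂ n ≤ N, birk θ n ⁻¹' Ici 0
  have hclosed : ∀ N, IsClosed (K N) := fun N =>
    isClosed_Icc.inter <|
      isClosed_biInter fun n _ => (upperSemicontinuous_birk θ n).isClosed_preimage 0
  have hnonempty : ∀ N, (K N).Nonempty := fun N => by
    obtain ⟨x, hx⟩ := exists_forall_le_birk_nonneg θ N
    refine ⟨Int.fract x, ⟨Int.fract_nonneg x, (Int.fract_lt_one x).le⟩, ?_⟩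
    simpa [birk_fract] using hx
  have hanti : ∀ N, K (N + 1) ⊆ K N := fun N =>
    inter_subset_inter_right _ (biInter_subset_biInter_left fun n hn => Nat.le_succ_of_le hn)
  obtain ⟨x, hx⟩ := IsCompact.nonempty_iInter_of_sequence_nonempty_isCompact_isClosed K hanti
    hnonempty (isCompact_Icc.of_isClosed_subset (hclosed 0) inter_subset_left) hclosed
  exact ⟨x, fun n => mem_iInter₂.1 (mem_iInter.1 hx n).2 n le_rfl⟩

lemma fract_add_mul_mem_heavy {x : ℝ} {m : ℕ} (hm : IsMinOn (fun n => birk θ n x) (Ici m) m) :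
    Int.fract (x + m * θ) ∈ heavy θ := by
  refine ⟨⟨Int.fract_nonneg _, Int.fract_lt_one _⟩, fun n _ => ?_⟩
  have hmn : birk θ m x ≤ birk θ (m + n) x := hm (Nat.le_add_right m n)
  rw [birk_add] at hmn
  rw [birk_fract]
  linarith

end Birkhoff

theorem stmt12_general (θ : ℝ) (hθ : Irrational θ) :
    (heavy θ).Infinite := by
  obtain ⟨x, hx⟩ := exists_forall_birk_nonneg θ
  choose u hu using fun n => exists_natCast_eq_birk θ (hx n)
  refine ((infinite_setOf_isMinOn_Ici u).image (hθ.injective_fract_add_nat_mul x).injOn).mono ?_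
  rintro _ ⟨m, hm, rfl⟩
  have hmin : IsMinOn (fun n => birk θ n x) (Ici m) m := by
    simpa only [Function.comp_def, ← hu] using hm.comp_mono (Nat.mono_cast (α := ℝ))
  exact fract_add_mul_mem_heavy θ hmin

/-- For every irrational `θ ∈ (0,1)`, the heavy set `H_θ` is infinite. -/
theorem stmt12 (θ : ℝ) (hθ : Irrational θ) (h0 : 0 < θ) (h1 : θ < 1) :
    (heavy θ).Infinite :=
  stmt12_general θ hθ
end

section
/- Let θ ∈ (0,1) be irrational with θ < 1/2. Then H_θ ∩ [θ, 1/2] = H*_θ + θ (pointwise translation); that is, x ∈ [θ, 1/2] satisfies Sₙ(x) ≥ 0 for all n ≥ 1 if and only if x - θ ∈ H*_θ. -/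
open Filter Set

/-! If `x ∈ [θ, 1/2]` then `f(x - θ) = 1`, so the cocycle identity
`S_{n+1}(x - θ) = 1 + Sₙ(x)` turns `Sₙ(x) ≥ 0` into `S_{n+1}(x - θ) > 0`. Conversely, if
`y ∈ H*_θ` then `S₁(y) > 0` and `S₂(y) > 0` force `y, y + θ ∈ [0, 1/2]`, and since the Birkhoff
sums are integers, `S_{n+1}(y) = 1 + Sₙ(y + θ) > 0` gives `Sₙ(y + θ) ≥ 0`. -/

lemma circf_eq_one_or_eq_neg_one (x : ℝ) : circf x = 1 ∨ circf x = -1 := by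
  unfold circf
  split_ifs <;> simp

lemma circf_eq_one_iff {x : ℝ} (hx : x ∈ Ico 0 1) : circf x = 1 ↔ x ≤ 1/2 := by
  rw [circf, Int.fract_eq_self.2 hx]
  split_ifs with h <;> norm_num [h]

lemma birk_succ_eq_circf_add (θ : ℝ) (n : ℕ) (x : ℝ) :
    birk θ (n + 1) x = circf x + birk θ n (x + θ) := by
  rw [birk, Finset.sum_range_succ', add_comm, birk]
  simp only [Nat.cast_zero, zero_mul, add_zero, Nat.cast_succ]
  congr 1
  exact Finset.sum_congr rfl fun i _ => by ring_nf

lemma exists_int_birk_eq (θ : ℝ) (n : ℕ) (x : ℝ) : ∃ k : ℤ, birk θ n x = k := by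
  have hint : ∀ y, ∃ k : ℤ, circf y = k := fun y =>
    (circf_eq_one_or_eq_neg_one y).elim (fun h => ⟨1, by simp [h]⟩) (fun h => ⟨-1, by simp [h]⟩)
  choose k hk using hint
  exact ⟨∑ i ∈ Finset.range n, k (x + i * θ), by simp [birk, hk]⟩

lemma one_le_birk_of_pos {θ : ℝ} {n : ℕ} {x : ℝ} (h : 0 < birk θ n x) : 1 ≤ birk θ n x := by
  obtain ⟨k, hk⟩ := exists_int_birk_eq θ n x
  rw [hk] at h ⊢
  exact_mod_cast Int.cast_pos.1 h

lemma sub_mem_sheavy_of_mem_heavy {θ x : ℝ} (hθ : 0 ≤ θ) (hx : x ∈ heavy θ)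
    (hθx : θ ≤ x) (hx2 : x ≤ 1/2) : x - θ ∈ sheavy θ := by
  obtain ⟨⟨-, hx1⟩, hS⟩ := hx
  have hIco : x - θ ∈ Ico 0 1 := ⟨by linarith, by linarith⟩
  have hf : circf (x - θ) = 1 := (circf_eq_one_iff hIco).2 (by linarith)
  refine ⟨hIco, fun n hn => ?_⟩
  obtain ⟨m, rfl⟩ := Nat.exists_eq_add_of_le' hn
  rw [birk_succ_eq_circf_add, hf, sub_add_cancel]
  rcases m.eq_zero_or_pos with rfl | hm
  · simp [birk]
  · linarith [hS m hm]

lemma add_mem_heavy_of_mem_sheavy {θ y : ℝ} (hθ0 : 0 ≤ θ) (hθ2 : θ < 1/2) (hy : y ∈ sheavy θ) :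
    y + θ ∈ heavy θ ∩ Icc θ (1/2) := by
  obtain ⟨hIco, hS⟩ := hy
  have hf : circf y = 1 := by
    have := hS 1 le_rfl
    rw [birk_one] at this
    exact (circf_eq_one_or_eq_neg_one y).resolve_right fun h => by linarith
  have hy2 : y ≤ 1/2 := (circf_eq_one_iff hIco).1 hf
  have hIco' : y + θ ∈ Ico 0 1 := ⟨by linarith [hIco.1], by linarith⟩
  have hyθ : y + θ ≤ 1/2 := by
    have := hS 2 (by norm_num)
    rw [birk_succ_eq_circf_add, birk_one, hf] at this
    refine (circf_eq_one_iff hIco').1 ?_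
    exact (circf_eq_one_or_eq_neg_one _).resolve_right fun h => by linarith
  refine ⟨⟨hIco', fun n _ => ?_⟩, by linarith [hIco.1], hyθ⟩
  have := one_le_birk_of_pos (hS (n + 1) (by omega))
  rw [birk_succ_eq_circf_add, hf] at this
  linarith

theorem stmt13_general (θ : ℝ) (h0 : 0 < θ) (h2 : θ < 1/2) :
    heavy θ ∩ Set.Icc θ (1/2) = (fun x : ℝ => x + θ) '' sheavy θ := by
  ext x
  constructor
  · rintro ⟨hx, hθx, hx2⟩
    exact ⟨x - θ, sub_mem_sheavy_of_mem_heavy h0.le hx hθx hx2, sub_add_cancel x θ⟩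
  · rintro ⟨y, hy, rfl⟩
    exact add_mem_heavy_of_mem_sheavy h0.le h2 hy

/-- For irrational `θ ∈ (0,1/2)`: `H_θ ∩ [θ,1/2] = H*_θ + θ`. -/
theorem stmt13 (θ : ℝ) (hθ : Irrational θ) (h0 : 0 < θ) (h2 : θ < 1/2) :
    heavy θ ∩ Set.Icc θ (1/2) = (fun x : ℝ => x + θ) '' sheavy θ :=
  stmt13_general θ h0 h2
end
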